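/- arXiv:2106.04633 — 4 statements merged into one kernel-verified Lean document; each statement's English description precedes it below -/
import Mathlib

section
/- Let H ⊆ V, let S_w ⊆ V for w ∈ H with w ∉ S_w, m = Σ_{w ∈ H} |S_w| > 0, and ψ = (1/√m) Σ_{w ∈ H} Σ_{v ∈ S_w} e_{(w,v)}. Let B be a finite set of ordered pairs (u,v) of distinct vertices whose underlying edges are pairwise vertex-disjoint. Then Σ_{w ∈ H} Σ_{(u,v) ∈ B} ( ⟨(e_{(w,u)} + e_{(w,v)})/√2, ψ⟩² − ⟨(e_{(w,u)} − e_{(w,v)})/√2, ψ⟩² ) = (2/m) · |{ (w,(u,v)) ∈ H × B : u ∈ S_w and v ∈ S_w }|. In particular, if for every w ∈ H and (u,v) ∈ B not both of u,v lie in S_w, this sum is 0, while if exactly T' pairs (w,(u,v)) have both u,v ∈ S_w it equals 2T'/m. -/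
open scoped RealInnerProductSpace

/-- The standard basis vector of `EuclideanSpace ℝ (V × V)` for a directed edge. -/
noncomputable def evec {V : Type*} [Fintype V] [DecidableEq V] (d : V × V) :
    EuclideanSpace ℝ (V × V) :=
  EuclideanSpace.single d 1

/-- Summing the differences of squared inner products of the hub-spoke state `ψ` with the
vectors `(e_{(w,u)} ± e_{(w,v)})/√2` over hubs `w ∈ H` and disjoint pairs `(u,v) ∈ B`
yields `(2/m)` times the number of pairs `(w,(u,v))` with both `u,v` spokes of `w`.
In particular it is `0` when no such pair exists and `2T'/m` when there are exactly `T'`. -/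
theorem stmt_3 {V : Type*} [Fintype V] [DecidableEq V]
    (H : Finset V) (S : V → Finset V) (hS : ∀ w ∈ H, w ∉ S w)
    (m : ℕ) (hm : m = ∑ w ∈ H, (S w).card) (hm0 : 0 < m)
    (ψ : EuclideanSpace ℝ (V × V))
    (hψ : ψ = (Real.sqrt m)⁻¹ • ∑ w ∈ H, ∑ v ∈ S w, evec (w, v))
    (B : Finset (V × V))
    (hne : ∀ p ∈ B, p.1 ≠ p.2)
    (hdisj : ∀ p ∈ B, ∀ q ∈ B, p ≠ q → ({p.1, p.2} : Set V) ∩ {q.1, q.2} = ∅) :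
    (∑ w ∈ H, ∑ p ∈ B,
        (⟪(Real.sqrt 2)⁻¹ • (evec (w, p.1) + evec (w, p.2)), ψ⟫ ^ 2 -
          ⟪(Real.sqrt 2)⁻¹ • (evec (w, p.1) - evec (w, p.2)), ψ⟫ ^ 2)) =
      (2 / m) *
        (((H ×ˢ B).filter (fun x : V × V × V => x.2.1 ∈ S x.1 ∧ x.2.2 ∈ S x.1)).card : ℝ) ∧
    ((∀ w ∈ H, ∀ p ∈ B, ¬(p.1 ∈ S w ∧ p.2 ∈ S w)) →
      (∑ w ∈ H, ∑ p ∈ B,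
        (⟪(Real.sqrt 2)⁻¹ • (evec (w, p.1) + evec (w, p.2)), ψ⟫ ^ 2 -
          ⟪(Real.sqrt 2)⁻¹ • (evec (w, p.1) - evec (w, p.2)), ψ⟫ ^ 2)) = 0) ∧
    (∀ T' : ℕ,
      ((H ×ˢ B).filter (fun x : V × V × V => x.2.1 ∈ S x.1 ∧ x.2.2 ∈ S x.1)).card = T' →
      (∑ w ∈ H, ∑ p ∈ B,
        (⟪(Real.sqrt 2)⁻¹ • (evec (w, p.1) + evec (w, p.2)), ψ⟫ ^ 2 -
          ⟪(Real.sqrt 2)⁻¹ • (evec (w, p.1) - evec (w, p.2)), ψ⟫ ^ 2)) = 2 * T' / m) := by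

  have hsingle : ∀ d e : V × V, ⟪evec d, evec e⟫ = if d = e then (1 : ℝ) else 0 := by
    intro d e
    simp [evec, EuclideanSpace.inner_single_left, EuclideanSpace.single_apply, eq_comm]
  have hinner : ∀ w ∈ H, ∀ u : V, ⟪evec (w, u), ψ⟫ =
      (Real.sqrt m)⁻¹ * (if u ∈ S w then 1 else 0) := by
    intro w hw u
    rw [hψ, real_inner_smul_right]
    congr 1
    rw [inner_sum, Finset.sum_eq_single w]
    · rw [inner_sum]
      simp [hsingle, Prod.ext_iff, Finset.sum_ite_eq, Finset.sum_ite_eq']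
    · intro b _ hb
      rw [inner_sum]
      apply Finset.sum_eq_zero
      intro v _
      simp [hsingle, Prod.ext_iff, hb.symm]
    · intro h; exact absurd hw h
  have h2 : (Real.sqrt 2)⁻¹ ^ 2 = (2 : ℝ)⁻¹ := by
    rw [← Real.sqrt_inv, Real.sq_sqrt]; norm_num
  have hmne : (m : ℝ) ≠ 0 := Nat.cast_ne_zero.mpr hm0.ne'
  have hmsq : (Real.sqrt m)⁻¹ ^ 2 = (m : ℝ)⁻¹ := by
    rw [← Real.sqrt_inv, Real.sq_sqrt]
    positivity
  have key : (∑ w ∈ H, ∑ p ∈ B,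
        (⟪(Real.sqrt 2)⁻¹ • (evec (w, p.1) + evec (w, p.2)), ψ⟫ ^ 2 -
          ⟪(Real.sqrt 2)⁻¹ • (evec (w, p.1) - evec (w, p.2)), ψ⟫ ^ 2)) =
      (2 / m) *
        (((H ×ˢ B).filter (fun x : V × V × V => x.2.1 ∈ S x.1 ∧ x.2.2 ∈ S x.1)).card : ℝ) := by
    have hterm : ∀ w ∈ H, ∀ p ∈ B,
        (⟪(Real.sqrt 2)⁻¹ • (evec (w, p.1) + evec (w, p.2)), ψ⟫ ^ 2 -
          ⟪(Real.sqrt 2)⁻¹ • (evec (w, p.1) - evec (w, p.2)), ψ⟫ ^ 2) =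
        if p.1 ∈ S w ∧ p.2 ∈ S w then (2 : ℝ) / m else 0 := by
      intro w hw p hp
      rw [real_inner_smul_left, real_inner_smul_left, inner_add_left, inner_sub_left,
        hinner w hw p.1, hinner w hw p.2]
      have expand : ∀ x y : ℝ,
          ((Real.sqrt 2)⁻¹ * (x + y)) ^ 2 - ((Real.sqrt 2)⁻¹ * (x - y)) ^ 2
          = 2 * (x * y) := by
        intro x y
        have : ((Real.sqrt 2)⁻¹ * (x + y)) ^ 2 - ((Real.sqrt 2)⁻¹ * (x - y)) ^ 2
            = (Real.sqrt 2)⁻¹ ^ 2 * ((x + y) ^ 2 - (x - y) ^ 2) := by ring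
        rw [this, h2]; ring
      rw [expand]
      by_cases h1 : p.1 ∈ S w <;> by_cases hq : p.2 ∈ S w <;>
        simp [h1, hq] <;>
        · rw [show (Real.sqrt m)⁻¹ * (Real.sqrt m)⁻¹ = ((m : ℝ))⁻¹ by rw [← sq]; exact hmsq]
          field_simp
    calc (∑ w ∈ H, ∑ p ∈ B,
        (⟪(Real.sqrt 2)⁻¹ • (evec (w, p.1) + evec (w, p.2)), ψ⟫ ^ 2 -
          ⟪(Real.sqrt 2)⁻¹ • (evec (w, p.1) - evec (w, p.2)), ψ⟫ ^ 2))
        = ∑ w ∈ H, ∑ p ∈ B, (if p.1 ∈ S w ∧ p.2 ∈ S w then (2 : ℝ) / m else 0) := by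
          refine Finset.sum_congr rfl fun w hw => Finset.sum_congr rfl fun p hp => ?_
          exact hterm w hw p hp
      _ = ∑ x ∈ H ×ˢ B, (if x.2.1 ∈ S x.1 ∧ x.2.2 ∈ S x.1 then (2 : ℝ) / m else 0) := by
          rw [Finset.sum_product]
      _ = (2 / m) *
        (((H ×ˢ B).filter (fun x : V × V × V => x.2.1 ∈ S x.1 ∧ x.2.2 ∈ S x.1)).card : ℝ) := by
          rw [← Finset.sum_filter]
          simp [mul_comm]
  refine ⟨key, ?_, ?_⟩
  · intro hnone
    rw [key]
    have : ((H ×ˢ B).filter (fun x : V × V × V => x.2.1 ∈ S x.1 ∧ x.2.2 ∈ S x.1)) = ∅ := by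
      rw [Finset.filter_eq_empty_iff]
      intro x hx
      rw [Finset.mem_product] at hx
      exact hnone x.1 hx.1 x.2 hx.2
    simp [this]
  · intro T' hT'
    rw [key, hT']
    ring
end

section
/- Let N be a natural number, I ⊆ Fin N, and S ⊆ V × V a set of directed edges, with Z = |I| + |S| > 0. Let ψ = (1/√Z)( Σ_{i ∈ I} e_{inr i} + Σ_{d ∈ S} e_{inl d} ) in EuclideanSpace ℝ ((V × V) ⊕ Fin N). Fix distinct x, y ∈ V and set W⁺ = { w ∈ V : (w,x) ∈ S and (w,y) ∈ S } and W⁻ = { w ∈ V : exactly one of (w,x), (w,y) lies in S }. Then ‖O^{xy}_1 ψ‖² = (2|W⁺| + |W⁻|/2)/Z, ‖O^{xy}_{-1} ψ‖² = (|W⁻|/2)/Z, and ‖O^{xy}_0 ψ‖² = (Z − 2|W⁺| − |W⁻|)/Z. -/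
open scoped RealInnerProductSpace

/-- The standard basis vector of `EuclideanSpace ℝ ((V × V) ⊕ Fin N)`, indexed by either a
directed edge (`Sum.inl`) or a dummy index (`Sum.inr`). -/
noncomputable def evecD {V : Type*} [Fintype V] [DecidableEq V] {N : ℕ}
    (d : (V × V) ⊕ Fin N) : EuclideanSpace ℝ ((V × V) ⊕ Fin N) :=
  EuclideanSpace.single d 1

lemma inner_evecD {V : Type*} [Fintype V] [DecidableEq V] {N : ℕ}
    (d d' : (V × V) ⊕ Fin N) :
    ⟪evecD d, evecD d'⟫ = if d = d' then (1:ℝ) else 0 := by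
  simp [evecD, EuclideanSpace.inner_single_left, EuclideanSpace.single_apply, eq_comm]

lemma inner_sum_smul_sum_smul {E : Type*} [NormedAddCommGroup E] [InnerProductSpace ℝ E]
    {V : Type*} [Fintype V] (g h : V → E) (c d : V → ℝ) :
    ⟪∑ w : V, c w • g w, ∑ v : V, d v • h v⟫
      = ∑ w : V, ∑ v : V, c w * d v * ⟪g w, h v⟫ := by
  rw [sum_inner]
  refine Finset.sum_congr rfl fun w _ => ?_
  rw [inner_sum]
  refine Finset.sum_congr rfl fun v _ => ?_
  rw [real_inner_smul_left, real_inner_smul_right]; ring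


/-- For the uniform superposition `ψ` over dummy indices `I` and directed edges `S`, with
`Z = |I| + |S|`, the squared norms of the projections `O^{xy}_1 ψ`, `O^{xy}_{-1} ψ`,
`O^{xy}_0 ψ` are `(2|W⁺| + |W⁻|/2)/Z`, `(|W⁻|/2)/Z` and `(Z - 2|W⁺| - |W⁻|)/Z`. -/
theorem stmt_5 {V : Type*} [Fintype V] [DecidableEq V] (N : ℕ)
    (I : Finset (Fin N)) (S : Finset (V × V))
    (Z : ℕ) (hZ : Z = I.card + S.card) (hZ0 : 0 < Z)
    (ψ : EuclideanSpace ℝ ((V × V) ⊕ Fin N))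
    (hψ : ψ = (Real.sqrt Z)⁻¹ •
      ((∑ i ∈ I, evecD (Sum.inr i)) + ∑ d ∈ S, evecD (Sum.inl d)))
    (x y : V) (hxy : x ≠ y)
    (O1 Om1 O0 :
      EuclideanSpace ℝ ((V × V) ⊕ Fin N) →ₗ[ℝ] EuclideanSpace ℝ ((V × V) ⊕ Fin N))
    (hO1 : ∀ φ, O1 φ = (1 / 2 : ℝ) • ∑ w : V,
      ⟪evecD (Sum.inl (w, x)) + evecD (Sum.inl (w, y)), φ⟫ •
        (evecD (Sum.inl (w, x)) + evecD (Sum.inl (w, y))))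
    (hOm1 : ∀ φ, Om1 φ = (1 / 2 : ℝ) • ∑ w : V,
      ⟪evecD (Sum.inl (w, x)) - evecD (Sum.inl (w, y)), φ⟫ •
        (evecD (Sum.inl (w, x)) - evecD (Sum.inl (w, y))))
    (hO0 : O0 = LinearMap.id - O1 - Om1)
    (Wp Wm : Finset V)
    (hWp : Wp = Finset.univ.filter (fun w : V => (w, x) ∈ S ∧ (w, y) ∈ S))
    (hWm : Wm = Finset.univ.filter (fun w : V => ((w, x) ∈ S ↔ (w, y) ∉ S))) :
    ‖O1 ψ‖ ^ 2 = (2 * (Wp.card : ℝ) + (Wm.card : ℝ) / 2) / Z ∧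
    ‖Om1 ψ‖ ^ 2 = ((Wm.card : ℝ) / 2) / Z ∧
    ‖O0 ψ‖ ^ 2 = ((Z : ℝ) - 2 * (Wp.card : ℝ) - (Wm.card : ℝ)) / Z := by
  have hZR : (0:ℝ) < (Z:ℝ) := by exact_mod_cast hZ0
  have hZne : (Z:ℝ) ≠ 0 := ne_of_gt hZR
  set r : ℝ := (Real.sqrt Z)⁻¹ with hr
  have hr2 : r * r = (Z:ℝ)⁻¹ := by
    rw [hr, ← mul_inv]
    rw [Real.mul_self_sqrt (le_of_lt hZR)]
  -- the f vectors
  set fp : V → EuclideanSpace ℝ ((V × V) ⊕ Fin N) :=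
    fun w => evecD (Sum.inl (w, x)) + evecD (Sum.inl (w, y)) with hfp
  set fm : V → EuclideanSpace ℝ ((V × V) ⊕ Fin N) :=
    fun w => evecD (Sum.inl (w, x)) - evecD (Sum.inl (w, y)) with hfm
  have hne : ∀ w v : V, (Sum.inl (w, x) : (V × V) ⊕ Fin N) ≠ Sum.inl (v, y) := by
    intro w v h
    exact hxy (congrArg (fun z => (Sum.elim Prod.snd (fun _ => x)) z) h)
  have hfpfp : ∀ w v, ⟪fp w, fp v⟫ = if w = v then (2:ℝ) else 0 := by
    intro w v
    simp only [hfp, inner_add_left, inner_add_right, inner_evecD]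
    by_cases h : w = v <;> simp [h, Prod.ext_iff, hxy, hxy.symm] <;> norm_num
  have hfmfm : ∀ w v, ⟪fm w, fm v⟫ = if w = v then (2:ℝ) else 0 := by
    intro w v
    simp only [hfm, inner_sub_left, inner_sub_right, inner_evecD]
    by_cases h : w = v <;> simp [h, Prod.ext_iff, hxy, hxy.symm] <;> norm_num
  have hfpfm : ∀ w v, ⟪fp w, fm v⟫ = 0 := by
    intro w v
    simp only [hfp, hfm, inner_add_left, inner_sub_right, inner_evecD]
    by_cases h : w = v <;> simp [h, Prod.ext_iff, hxy, hxy.symm]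
  -- coordinates of ψ
  have hinl : ∀ d : V × V, ⟪evecD (Sum.inl d), ψ⟫
      = r * (if d ∈ S then (1:ℝ) else 0) := by
    intro d
    rw [hψ, real_inner_smul_right, inner_add_right, inner_sum, inner_sum]
    simp only [inner_evecD]
    have e1 : ∑ i ∈ I, (if (Sum.inl d : (V × V) ⊕ Fin N) = Sum.inr i then (1:ℝ) else 0) = 0 := by
      simp
    have e2 : ∑ d' ∈ S, (if (Sum.inl d : (V × V) ⊕ Fin N) = Sum.inl d' then (1:ℝ) else 0)
        = (if d ∈ S then (1:ℝ) else 0) := by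
      simp [Finset.sum_ite_eq]
    rw [e1, e2, zero_add]
  have hinr : ∀ i : Fin N, ⟪evecD (Sum.inr i), ψ⟫
      = r * (if i ∈ I then (1:ℝ) else 0) := by
    intro i
    rw [hψ, real_inner_smul_right, inner_add_right, inner_sum, inner_sum]
    simp only [inner_evecD]
    have e1 : ∑ j ∈ I, (if (Sum.inr i : (V × V) ⊕ Fin N) = Sum.inr j then (1:ℝ) else 0)
        = (if i ∈ I then (1:ℝ) else 0) := by
      simp [Finset.sum_ite_eq]
    have e2 : ∑ d' ∈ S, (if (Sum.inr i : (V × V) ⊕ Fin N) = Sum.inl d' then (1:ℝ) else 0) = 0 := by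
      simp
    rw [e1, e2, add_zero]
  set c : V → ℝ := fun w => ⟪fp w, ψ⟫ with hc
  set b : V → ℝ := fun w => ⟪fm w, ψ⟫ with hb
  have hcval : ∀ w, c w = r * ((if (w, x) ∈ S then (1:ℝ) else 0)
      + (if (w, y) ∈ S then (1:ℝ) else 0)) := by
    intro w; rw [hc]; simp only [hfp, inner_add_left, hinl]; ring
  have hbval : ∀ w, b w = r * ((if (w, x) ∈ S then (1:ℝ) else 0)
      - (if (w, y) ∈ S then (1:ℝ) else 0)) := by
    intro w; rw [hb]; simp only [hfm, inner_sub_left, hinl]; ring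
  -- combinatorial sums
  have key1 : ∑ w : V, ((if (w, x) ∈ S then (1:ℝ) else 0)
      + (if (w, y) ∈ S then (1:ℝ) else 0))^2 = 4 * (Wp.card:ℝ) + Wm.card := by
    rw [hWp, hWm, Finset.card_filter, Finset.card_filter]
    push_cast
    rw [Finset.mul_sum, ← Finset.sum_add_distrib]
    refine Finset.sum_congr rfl fun w _ => ?_
    by_cases h1 : (w, x) ∈ S <;> by_cases h2 : (w, y) ∈ S <;>
      simp [h1, h2] <;> norm_num
  have key2 : ∑ w : V, ((if (w, x) ∈ S then (1:ℝ) else 0)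
      - (if (w, y) ∈ S then (1:ℝ) else 0))^2 = (Wm.card:ℝ) := by
    rw [hWm, Finset.card_filter]
    push_cast
    refine Finset.sum_congr rfl fun w _ => ?_
    by_cases h1 : (w, x) ∈ S <;> by_cases h2 : (w, y) ∈ S <;>
      simp [h1, h2] <;> norm_num
  have hsumc : ∑ w : V, c w ^ 2 = (4 * (Wp.card:ℝ) + Wm.card) / Z := by
    have : ∀ w : V, c w ^ 2 = (Z:ℝ)⁻¹ * ((if (w, x) ∈ S then (1:ℝ) else 0)
        + (if (w, y) ∈ S then (1:ℝ) else 0))^2 := by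
      intro w; rw [hcval w, mul_pow, ← hr2]; ring
    rw [Finset.sum_congr rfl fun w _ => this w, ← Finset.mul_sum, key1]
    ring
  have hsumb : ∑ w : V, b w ^ 2 = (Wm.card:ℝ) / Z := by
    have : ∀ w : V, b w ^ 2 = (Z:ℝ)⁻¹ * ((if (w, x) ∈ S then (1:ℝ) else 0)
        - (if (w, y) ∈ S then (1:ℝ) else 0))^2 := by
      intro w; rw [hbval w, mul_pow, ← hr2]; ring
    rw [Finset.sum_congr rfl fun w _ => this w, ← Finset.mul_sum, key2]
    ring
  -- O1 ψ and Om1 ψ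
  have hO1ψ : O1 ψ = (1 / 2 : ℝ) • ∑ w : V, c w • fp w := hO1 ψ
  have hOm1ψ : Om1 ψ = (1 / 2 : ℝ) • ∑ w : V, b w • fm w := hOm1 ψ
  have hinner11 : ⟪O1 ψ, O1 ψ⟫ = (1/2) * ∑ w : V, c w ^ 2 := by
    rw [hO1ψ, real_inner_smul_left, real_inner_smul_right, inner_sum_smul_sum_smul]
    have : ∀ w : V, ∑ v : V, c w * c v * ⟪fp w, fp v⟫ = 2 * c w ^ 2 := by
      intro w
      rw [Finset.sum_eq_single w]
      · rw [hfpfp]; simp; ring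
      · intro v _ hv; rw [hfpfp]; simp [Ne.symm hv]
      · simp
    rw [Finset.sum_congr rfl fun w _ => this w, ← Finset.mul_sum]
    ring
  have hinnermm : ⟪Om1 ψ, Om1 ψ⟫ = (1/2) * ∑ w : V, b w ^ 2 := by
    rw [hOm1ψ, real_inner_smul_left, real_inner_smul_right, inner_sum_smul_sum_smul]
    have : ∀ w : V, ∑ v : V, b w * b v * ⟪fm w, fm v⟫ = 2 * b w ^ 2 := by
      intro w
      rw [Finset.sum_eq_single w]
      · rw [hfmfm]; simp; ring
      · intro v _ hv; rw [hfmfm]; simp [Ne.symm hv]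
      · simp
    rw [Finset.sum_congr rfl fun w _ => this w, ← Finset.mul_sum]
    ring
  have hcross : ⟪O1 ψ, Om1 ψ⟫ = 0 := by
    rw [hO1ψ, hOm1ψ, real_inner_smul_left, real_inner_smul_right, inner_sum_smul_sum_smul]
    simp [hfpfm]
  have hpsi1 : ⟪ψ, O1 ψ⟫ = (1/2) * ∑ w : V, c w ^ 2 := by
    rw [hO1ψ, real_inner_smul_right, inner_sum]
    congr 1
    refine Finset.sum_congr rfl fun w _ => ?_
    rw [real_inner_smul_right, real_inner_comm]
    rw [show (⟪fp w, ψ⟫ : ℝ) = c w from rfl]; ring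
  have hpsim : ⟪ψ, Om1 ψ⟫ = (1/2) * ∑ w : V, b w ^ 2 := by
    rw [hOm1ψ, real_inner_smul_right, inner_sum]
    congr 1
    refine Finset.sum_congr rfl fun w _ => ?_
    rw [real_inner_smul_right, real_inner_comm]
    rw [show (⟪fm w, ψ⟫ : ℝ) = b w from rfl]; ring
  have hpsipsi : ⟪ψ, ψ⟫ = 1 := by
    have step : ⟪ψ, ψ⟫ = r * ((∑ i ∈ I, ⟪evecD (Sum.inr i), ψ⟫)
        + ∑ d ∈ S, ⟪evecD (Sum.inl d), ψ⟫) := by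
      nth_rewrite 1 [hψ]
      rw [real_inner_smul_left, inner_add_left, sum_inner, sum_inner]
    have hIs : ∑ i ∈ I, ⟪evecD (Sum.inr i), ψ⟫ = (I.card : ℝ) * r := by
      rw [Finset.sum_congr rfl (fun i hi => by rw [hinr i, if_pos hi, mul_one]),
        Finset.sum_const, nsmul_eq_mul]
    have hSs : ∑ d ∈ S, ⟪evecD (Sum.inl d), ψ⟫ = (S.card : ℝ) * r := by
      rw [Finset.sum_congr rfl (fun d hd => by rw [hinl d, if_pos hd, mul_one]),
        Finset.sum_const, nsmul_eq_mul]
    rw [step, hIs, hSs]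
    have hZc : ((I.card : ℝ) + S.card) = (Z:ℝ) := by rw [hZ]; push_cast; ring
    rw [show r * ((I.card:ℝ) * r + (S.card:ℝ) * r)
        = r * r * ((I.card:ℝ) + (S.card:ℝ)) by ring, hr2, hZc]
    exact inv_mul_cancel₀ hZne
  -- assemble
  have n1 : ‖O1 ψ‖ ^ 2 = (2 * (Wp.card : ℝ) + (Wm.card : ℝ) / 2) / Z := by
    rw [← real_inner_self_eq_norm_sq, hinner11, hsumc]
    field_simp; ring
  have nm : ‖Om1 ψ‖ ^ 2 = ((Wm.card : ℝ) / 2) / Z := by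
    rw [← real_inner_self_eq_norm_sq, hinnermm, hsumb]
    ring
  have n0 : ‖O0 ψ‖ ^ 2 = ((Z : ℝ) - 2 * (Wp.card : ℝ) - (Wm.card : ℝ)) / Z := by
    have hO0ψ : O0 ψ = ψ - O1 ψ - Om1 ψ := by
      rw [hO0]; simp [LinearMap.sub_apply]
    rw [← real_inner_self_eq_norm_sq, hO0ψ]
    rw [inner_sub_left, inner_sub_left, inner_sub_right, inner_sub_right,
      inner_sub_right, inner_sub_right, inner_sub_right, inner_sub_right]
    have h1' : ⟪O1 ψ, ψ⟫ = (1/2) * ∑ w : V, c w ^ 2 := by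
      rw [real_inner_comm]; exact hpsi1
    have hm' : ⟪Om1 ψ, ψ⟫ = (1/2) * ∑ w : V, b w ^ 2 := by
      rw [real_inner_comm]; exact hpsim
    have hx' : ⟪Om1 ψ, O1 ψ⟫ = 0 := by
      rw [real_inner_comm]; exact hcross
    rw [hpsipsi, hpsi1, hpsim, hcross, hinner11, hinnermm, h1', hm', hx', hsumc, hsumb]
    field_simp; ring
  exact ⟨n1, nm, n0⟩
end

section
/- Fix a vertex w of G and suppose (w, u_1, v_1), …, (w, u_r, v_r) are canonically ordered triangles of G sharing the first vertex w, such that the 2r vertices u_1, …, u_r, v_1, …, v_r are pairwise distinct. Then Σ_{i=1}^{r} ( degb(w u_i v_i) + degb(w v_i u_i) ) ≤ Σ_{i=1}^{r} ( d_{u_i} + d_{v_i} ) ≤ 2m. In particular, at most 2m/k of these triangles satisfy degb(w u_i v_i) + degb(w v_i u_i) ≥ k, for any real k > 0. -/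
/-- The (0-indexed) position of the edge `e` in the stream `σ`; junk value `0` if `e` does
not occur.  When `σ` is injective this is the unique `i` with `σ i = e`. -/
noncomputable def pos {V : Type*} [DecidableEq V] {m : ℕ} (σ : Fin m → Sym2 V) (e : Sym2 V) : ℕ :=
  if h : ∃ i, σ i = e then (h.choose : ℕ) else 0

/-- `degb σ u v w` is the number of edges incident to `v` arriving strictly between the
edges `uv` and `vw` in the stream `σ`. -/
noncomputable def degb {V : Type*} [DecidableEq V] {m : ℕ}
    (σ : Fin m → Sym2 V) (u v w : V) : ℕ :=
  (Finset.univ.filter (fun t : Fin m =>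
    pos σ s(u, v) < (t : ℕ) ∧ (t : ℕ) < pos σ s(v, w) ∧ v ∈ σ t)).card

/-- The degree of the vertex `v` in the streamed graph: the number of stream edges
incident to `v`. -/
def vdeg {V : Type*} [DecidableEq V] {m : ℕ} (σ : Fin m → Sym2 V) (v : V) : ℕ :=
  (Finset.univ.filter (fun t : Fin m => v ∈ σ t)).card

/-- `(u, v, w)` is a canonically ordered triangle of the streamed graph if the edges
`uv`, `uw`, `vw` all occur in the stream and `uv ≼ uw ≼ vw`. -/
def IsCanonTri {V : Type*} [DecidableEq V] {m : ℕ} (σ : Fin m → Sym2 V) (u v w : V) : Prop :=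
  s(u, v) ∈ Set.range σ ∧ s(u, w) ∈ Set.range σ ∧ s(v, w) ∈ Set.range σ ∧
    pos σ s(u, v) ≤ pos σ s(u, w) ∧ pos σ s(u, w) ≤ pos σ s(v, w)

/-- For canonically ordered triangles `(w, u_i, v_i)` sharing the first vertex `w`, with the
`2r` vertices `u_1, …, u_r, v_1, …, v_r` pairwise distinct,
`Σ_i (degb(w u_i v_i) + degb(w v_i u_i)) ≤ Σ_i (d_{u_i} + d_{v_i}) ≤ 2m`; consequently at
most `2m/k` of these triangles have `degb(w u_i v_i) + degb(w v_i u_i) ≥ k`. -/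
theorem stmt_9 {V : Type*} [Fintype V] [DecidableEq V] {m : ℕ} (σ : Fin m → Sym2 V)
    (hinj : Function.Injective σ) (hsimple : ∀ t, ¬(σ t).IsDiag)
    (w : V) (r : ℕ) (u v : Fin r → V)
    (hdistinct : Function.Injective (Sum.elim u v : Fin r ⊕ Fin r → V))
    (hcanon : ∀ i, IsCanonTri σ w (u i) (v i)) :
    (∑ i : Fin r, (degb σ w (u i) (v i) + degb σ w (v i) (u i))) ≤
      (∑ i : Fin r, (vdeg σ (u i) + vdeg σ (v i))) ∧
    (∑ i : Fin r, (vdeg σ (u i) + vdeg σ (v i))) ≤ 2 * m ∧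
    ∀ k : ℝ, 0 < k →
      (Nat.card {i : Fin r //
          k ≤ ((degb σ w (u i) (v i) + degb σ w (v i) (u i) : ℕ) : ℝ)} : ℝ) ≤
        2 * m / k := by
    classical
  have h1 : (∑ i : Fin r, (degb σ w (u i) (v i) + degb σ w (v i) (u i))) ≤
      ∑ i : Fin r, (vdeg σ (u i) + vdeg σ (v i)) := by
    refine Finset.sum_le_sum fun i _ => Nat.add_le_add ?_ ?_ <;>
    · apply Finset.card_le_card
      intro t ht
      simp only [Finset.mem_filter, degb, vdeg] at ht ⊢
      exact ⟨ht.1, ht.2.2.2⟩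
  have h2 : (∑ i : Fin r, (vdeg σ (u i) + vdeg σ (v i))) ≤ 2 * m := by
    have hsum : (∑ i : Fin r, (vdeg σ (u i) + vdeg σ (v i)))
        = ∑ j : Fin r ⊕ Fin r, vdeg σ (Sum.elim u v j) := by
      rw [Fintype.sum_sum_type, Finset.sum_add_distrib]
      simp
    rw [hsum]
    have hv : ∀ j : Fin r ⊕ Fin r, vdeg σ (Sum.elim u v j)
        = ∑ t : Fin m, if Sum.elim u v j ∈ σ t then 1 else 0 := by
      intro j; rw [vdeg, Finset.card_filter]
    simp_rw [hv]
    rw [Finset.sum_comm]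
    have hcard : ∀ t : Fin m,
        (∑ j : Fin r ⊕ Fin r, if Sum.elim u v j ∈ σ t then 1 else 0) ≤ 2 := by
      intro t
      rw [← Finset.card_filter]
      generalize σ t = e
      induction e using Sym2.ind with
      | _ a b =>
        have hsub : Finset.univ.filter (fun j : Fin r ⊕ Fin r => Sum.elim u v j ∈ s(a, b))
            ⊆ (Finset.univ.filter (fun j : Fin r ⊕ Fin r => Sum.elim u v j = a)) ∪
              (Finset.univ.filter (fun j : Fin r ⊕ Fin r => Sum.elim u v j = b)) := by
          intro j hj
          simp only [Finset.mem_filter, Sym2.mem_iff, Finset.mem_union] at hj ⊢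
          tauto
        have ha : (Finset.univ.filter
            (fun j : Fin r ⊕ Fin r => Sum.elim u v j = a)).card ≤ 1 := by
          refine Finset.card_le_one.mpr fun x hx y hy => ?_
          simp only [Finset.mem_filter] at hx hy
          exact hdistinct (hx.2.trans hy.2.symm)
        have hb : (Finset.univ.filter
            (fun j : Fin r ⊕ Fin r => Sum.elim u v j = b)).card ≤ 1 := by
          refine Finset.card_le_one.mpr fun x hx y hy => ?_
          simp only [Finset.mem_filter] at hx hy
          exact hdistinct (hx.2.trans hy.2.symm)
        calc _ ≤ _ := Finset.card_le_card hsub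
          _ ≤ _ := Finset.card_union_le _ _
          _ ≤ 2 := by omega
    calc (∑ t : Fin m, ∑ j : Fin r ⊕ Fin r, if Sum.elim u v j ∈ σ t then 1 else 0)
        ≤ ∑ _t : Fin m, 2 := Finset.sum_le_sum fun t _ => hcard t
      _ = 2 * m := by simp [Finset.sum_const, Nat.mul_comm]
  refine ⟨h1, h2, fun k hk => ?_⟩
  set S := Finset.univ.filter (fun i : Fin r =>
      k ≤ ((degb σ w (u i) (v i) + degb σ w (v i) (u i) : ℕ) : ℝ)) with hS
  have hcardeq : (Nat.card {i : Fin r //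
      k ≤ ((degb σ w (u i) (v i) + degb σ w (v i) (u i) : ℕ) : ℝ)}) = S.card := by
    rw [Nat.card_eq_fintype_card, Fintype.card_subtype]
  rw [hcardeq, le_div_iff₀ hk]
  have hstep : (S.card : ℝ) * k ≤
      ∑ i : Fin r, ((degb σ w (u i) (v i) + degb σ w (v i) (u i) : ℕ) : ℝ) := by
    calc (S.card : ℝ) * k = ∑ _i ∈ S, k := by rw [Finset.sum_const, nsmul_eq_mul]
      _ ≤ ∑ i ∈ S, ((degb σ w (u i) (v i) + degb σ w (v i) (u i) : ℕ) : ℝ) := by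
          refine Finset.sum_le_sum fun i hi => ?_
          simp only [hS, Finset.mem_filter] at hi
          exact hi.2
      _ ≤ _ := Finset.sum_le_sum_of_subset_of_nonneg (Finset.subset_univ S)
          (fun i _ _ => by positivity)
  refine hstep.trans ?_
  have : (∑ i : Fin r, ((degb σ w (u i) (v i) + degb σ w (v i) (u i) : ℕ) : ℝ))
      = ((∑ i : Fin r, (degb σ w (u i) (v i) + degb σ w (v i) (u i)) : ℕ) : ℝ) := by
    push_cast; ring
  rw [this]
  calc _ ≤ ((2 * m : ℕ) : ℝ) := Nat.cast_le.mpr (h1.trans h2)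
    _ = 2 * m := by push_cast; ring
end

section
/- Let (w,u,v) be a canonically ordered triangle of G (so wu ≼ wv ≼ uv), let t be the position of the edge uv in the stream σ, and let s_1 < t and s_2 < t be the positions of wu and wv respectively. Let f(1), …, f(m) be independent {0,1}-valued random variables with P(f(j) = 1) = 1/k for each j, where k ≥ 1. Let A = { j : s_1 < j < t and σ_j is incident to u } and B = { j : s_2 < j < t and σ_j is incident to v }. Then A and B are disjoint, |A| = degb(wuv), |B| = degb(wvu), and P( f(j) = 0 for all j ∈ A ∪ B ) = (1 − 1/k)^{degb(wuv) + degb(wvu)}. -/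
open MeasureTheory ProbabilityTheory Finset

lemma ne_of_mem_range_of_not_isDiag {V : Type*} {m : ℕ} {σ : Fin m → Sym2 V}
    (hsimple : ∀ t, ¬(σ t).IsDiag) {u v : V} (huv : s(u, v) ∈ Set.range σ) : u ≠ v := by
  obtain ⟨t, ht⟩ := huv
  rintro rfl
  exact hsimple t (ht ▸ Sym2.mk_isDiag_iff.mpr rfl)

section Stream

variable {V : Type*} [DecidableEq V] {m : ℕ} {σ : Fin m → Sym2 V}

lemma pos_apply (hinj : Function.Injective σ) (j : Fin m) : pos σ (σ j) = (j : ℕ) := by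
  have h : ∃ i, σ i = σ j := ⟨j, rfl⟩
  rw [pos, dif_pos h]
  exact congrArg _ (hinj h.choose_spec)

/-- The only edge incident to both `u` and `v` is `uv` itself, which does not arrive
before itself. -/
lemma disjoint_filter_incident_before (hinj : Function.Injective σ) {u v : V} (huv : u ≠ v)
    (a b : ℕ) :
    Disjoint (univ.filter fun j : Fin m => a < (j : ℕ) ∧ (j : ℕ) < pos σ s(u, v) ∧ u ∈ σ j)
      (univ.filter fun j : Fin m => b < (j : ℕ) ∧ (j : ℕ) < pos σ s(u, v) ∧ v ∈ σ j) := by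
  rw [disjoint_left]
  intro j hjA hjB
  simp only [mem_filter, mem_univ, true_and] at hjA hjB
  have hj : σ j = s(u, v) := (Sym2.mem_and_mem_iff huv).mp ⟨hjA.2.2, hjB.2.2⟩
  exact (hjA.2.1).ne (by rw [← hj, pos_apply hinj])

end Stream

lemma ProbabilityTheory.iIndepFun.measure_forall_mem_eq_false {Ω ι : Type*}
    [MeasurableSpace Ω] {μ : Measure Ω} [IsProbabilityMeasure μ] {f : ι → Ω → Bool}
    (hmeas : ∀ j, Measurable (f j)) (hindep : iIndepFun f μ) {p : ENNReal}
    (hp : ∀ j, μ {ω | f j ω = true} = p) (s : Finset ι) :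
    μ {ω | ∀ j ∈ s, f j ω = false} = (1 - p) ^ s.card := by
  have hset : {ω | ∀ j ∈ s, f j ω = false} = ⋂ j ∈ s, f j ⁻¹' {false} := by
    ext ω
    simp
  have hfalse (j : ι) : μ (f j ⁻¹' {false}) = 1 - p := by
    have hcompl : f j ⁻¹' {false} = {ω | f j ω = true}ᶜ := by
      ext ω
      simp
    have hmeas_true : MeasurableSet {ω | f j ω = true} := hmeas j (measurableSet_singleton true)
    rw [hcompl, prob_compl_eq_one_sub hmeas_true, hp j]
  rw [hset, hindep.meas_biInter fun j _ => ⟨{false}, trivial, rfl⟩,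
    prod_congr rfl fun j _ => hfalse j, prod_const]

theorem stmt_11_general {V : Type*} [DecidableEq V] {m : ℕ} (σ : Fin m → Sym2 V)
    (hinj : Function.Injective σ) (hsimple : ∀ t, ¬(σ t).IsDiag)
    (w u v : V) (hcanon : IsCanonTri σ w u v)
    (k : ℝ) (hk : 1 ≤ k)
    {Ω : Type*} [MeasurableSpace Ω] (μ : Measure Ω) [IsProbabilityMeasure μ]
    (f : Fin m → Ω → Bool) (hmeas : ∀ j, Measurable (f j))
    (hindep : iIndepFun f μ)
    (hp : ∀ j, μ {ω | f j ω = true} = ENNReal.ofReal (1 / k))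
    (A B : Finset (Fin m))
    (hA : A = Finset.univ.filter (fun j : Fin m =>
      pos σ s(w, u) < (j : ℕ) ∧ (j : ℕ) < pos σ s(u, v) ∧ u ∈ σ j))
    (hB : B = Finset.univ.filter (fun j : Fin m =>
      pos σ s(w, v) < (j : ℕ) ∧ (j : ℕ) < pos σ s(u, v) ∧ v ∈ σ j)) :
    Disjoint A B ∧ A.card = degb σ w u v ∧ B.card = degb σ w v u ∧
    μ {ω | ∀ j ∈ A ∪ B, f j ω = false} =
      ENNReal.ofReal ((1 - 1 / k) ^ (degb σ w u v + degb σ w v u)) := by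
  have huv : u ≠ v := ne_of_mem_range_of_not_isDiag hsimple hcanon.2.2.1
  have hdisj : Disjoint A B := hA ▸ hB ▸ disjoint_filter_incident_before hinj huv _ _
  have hAc : A.card = degb σ w u v := by rw [hA, degb]
  have hBc : B.card = degb σ w v u := by rw [hB, degb, Sym2.eq_swap (a := v)]
  refine ⟨hdisj, hAc, hBc, ?_⟩
  have hk' : 0 ≤ 1 - 1 / k := sub_nonneg.mpr (div_le_one_of_le₀ hk (by linarith))
  rw [hindep.measure_forall_mem_eq_false hmeas hp, card_union_of_disjoint hdisj, hAc, hBc,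
    ← ENNReal.ofReal_one, ← ENNReal.ofReal_sub _ (by positivity), ENNReal.ofReal_pow hk']

/-- For a canonically ordered triangle `(w,u,v)` and independent Bernoulli(1/k) variables
`f 1, …, f m`: the index sets `A` (edges incident to `u` strictly between `wu` and `uv`) and
`B` (edges incident to `v` strictly between `wv` and `uv`) are disjoint, of sizes
`degb(wuv)` and `degb(wvu)`, and the probability that `f` vanishes on all of `A ∪ B` is
`(1 − 1/k)^{degb(wuv) + degb(wvu)}`. -/
theorem stmt_11 {V : Type*} [Fintype V] [DecidableEq V] {m : ℕ} (σ : Fin m → Sym2 V)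
    (hinj : Function.Injective σ) (hsimple : ∀ t, ¬(σ t).IsDiag)
    (w u v : V) (hcanon : IsCanonTri σ w u v)
    (k : ℝ) (hk : 1 ≤ k)
    {Ω : Type*} [MeasurableSpace Ω] (μ : Measure Ω) [IsProbabilityMeasure μ]
    (f : Fin m → Ω → Bool) (hmeas : ∀ j, Measurable (f j))
    (hindep : iIndepFun f μ)
    (hp : ∀ j, μ {ω | f j ω = true} = ENNReal.ofReal (1 / k))
    (A B : Finset (Fin m))
    (hA : A = Finset.univ.filter (fun j : Fin m =>
      pos σ s(w, u) < (j : ℕ) ∧ (j : ℕ) < pos σ s(u, v) ∧ u ∈ σ j))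
    (hB : B = Finset.univ.filter (fun j : Fin m =>
      pos σ s(w, v) < (j : ℕ) ∧ (j : ℕ) < pos σ s(u, v) ∧ v ∈ σ j)) :
    Disjoint A B ∧ A.card = degb σ w u v ∧ B.card = degb σ w v u ∧
    μ {ω | ∀ j ∈ A ∪ B, f j ω = false} =
      ENNReal.ofReal ((1 - 1 / k) ^ (degb σ w u v + degb σ w v u)) :=
  stmt_11_general σ hinj hsimple w u v hcanon k hk μ f hmeas hindep hp A B hA hB
end
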